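/- For every integer n > 2, the number of numerical semigroups with maximum primitive n and primitive depth 2 equals Σ_{d | n} μ(n/d) · (2^(⌊(d−1)/2⌋) − 1), where μ is the Möbius function. -/

import Mathlib

/-- A numerical semigroup: a cofinite additive submonoid of ℕ, viewed as a set. -/
noncomputable def IsNumericalSemigroup (S : Set ℕ) : Prop :=
  0 ∈ S ∧ (∀ a ∈ S, ∀ b ∈ S, a + b ∈ S) ∧ (Sᶜ : Set ℕ).Finite

/-- The primitives (minimal generators): nonzero elements not a sum of two nonzero elements. -/
noncomputable def Primitives (S : Set ℕ) : Set ℕ :=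
  {s | s ∈ S ∧ s ≠ 0 ∧ ∀ a ∈ S, ∀ b ∈ S, a ≠ 0 → b ≠ 0 → a + b ≠ s}

/-- The maximum primitive. -/
noncomputable def MaxPrim (S : Set ℕ) : ℕ := sSup (Primitives S)

/-- The multiplicity: the smallest nonzero element. -/
noncomputable def Multiplicity (S : Set ℕ) : ℕ := sInf {s | s ∈ S ∧ s ≠ 0}

/-- The Frobenius number: the largest natural number not in S. -/
noncomputable def Frobenius (S : Set ℕ) : ℕ := sSup (Sᶜ : Set ℕ)

noncomputable def Conductor (S : Set ℕ) : ℕ := Frobenius S + 1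

/-- The genus: number of positive integers not in S. -/
noncomputable def Genus (S : Set ℕ) : ℕ := ((Sᶜ : Set ℕ) \ {0}).ncard

/-- Depth: ⌈c/m⌉ -/
noncomputable def Depth (S : Set ℕ) : ℕ := (Conductor S + Multiplicity S - 1) / Multiplicity S

/-- Primitive depth: ⌈maxprim/m⌉ -/
noncomputable def PrimDepth (S : Set ℕ) : ℕ := (MaxPrim S + Multiplicity S - 1) / Multiplicity S

/-- Submonoid of ℕ generated by a set, as a set. -/
noncomputable def GeneratedBy (Y : Set ℕ) : Set ℕ := (AddSubmonoid.closure Y : AddSubmonoid ℕ)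

/-- Left elements: elements of S below the Frobenius number. -/
noncomputable def Lefts (S : Set ℕ) : Set ℕ := {s | s ∈ S ∧ s < Frobenius S}

noncomputable def Lefts' (S : Set ℕ) : Set ℕ := Lefts S ∪ {Frobenius S}

/-- Embedding dimension. -/
noncomputable def EmbDim (S : Set ℕ) : ℕ := (Primitives S).ncard

/-- gcd of a set of naturals: the greatest common divisor of all elements. -/
noncomputable def SetGcd (Y : Set ℕ) : ℕ := sSup {d : ℕ | ∀ y ∈ Y, d ∣ y}

/-- The map Ψ of the paper: S ↦ ⟨L'(S)/gcd(L'(S))⟩. -/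
noncomputable def Psi (S : Set ℕ) : Set ℕ :=
  GeneratedBy ((fun a => a / SetGcd (Lefts' S)) '' Lefts' S)

/-!
Let `S` have multiplicity `m` and maximum primitive `n`. Depth two means `m < n ≤ 2m`, and
`n ≠ 2m = m + m`, so every primitive lies in `[m, n] ⊆ (n/2, n]`. Conversely, a set of gcd one
inside `(n/2, n]` that contains `n` and some smaller element is exactly the set of primitives of
the semigroup it generates, because any sum of two nonzero elements is at least twice its minimum,
which exceeds `n`. Hence `A_n(2)` counts the nonempty `B ⊆ (n/2, n)` with `gcd (B ∪ {n}) = 1`.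
Without the gcd condition there are `2^⌊(n-1)/2⌋ - 1` such `B`; sorting them by
`g = gcd (B ∪ {n})` and dividing by `g` gives `∑_{d ∣ n} A_d(2) = 2^⌊(n-1)/2⌋ - 1`, and Möbius
inversion finishes.
-/

open Finset

lemma Nat.setGcd_coe_finset (P : Finset ℕ) : Nat.setGcd ↑P = P.gcd id :=
  Nat.dvd_antisymm (Finset.dvd_gcd fun _ hp => Nat.setGcd_dvd_of_mem hp)
    (Nat.dvd_setGcd_iff.mpr fun _ hp => Finset.gcd_dvd hp)

lemma ceilDiv_eq_two_iff {m n : ℕ} (hm : 0 < m) :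
    (n + m - 1) / m = 2 ↔ m < n ∧ n ≤ 2 * m := by
  rw [Nat.div_eq_iff hm]
  omega

lemma multiplicity_le {S : Set ℕ} {s : ℕ} (hs : s ∈ S) (hs0 : s ≠ 0) :
    Multiplicity S ≤ s :=
  Nat.sInf_le ⟨hs, hs0⟩

section GeneratedBy

variable {Y : Set ℕ} {m n : ℕ}

lemma le_of_mem_generatedBy (hY : ∀ p ∈ Y, m ≤ p) {s : ℕ} (hs : s ∈ GeneratedBy Y)
    (hs0 : s ≠ 0) : m ≤ s := by
  induction hs using AddSubmonoid.closure_induction with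
  | mem x hx => exact hY x hx
  | zero => exact absurd rfl hs0
  | add x y _ _ ihx ihy =>
    rcases Nat.eq_zero_or_pos x with rfl | hx
    · simpa using ihy (by simpa using hs0)
    · exact (ihx hx.ne').trans (Nat.le_add_right x y)

lemma primitives_generatedBy_subset (Y : Set ℕ) : Primitives (GeneratedBy Y) ⊆ Y := by
  rintro s ⟨hs, hs0, hirred⟩
  induction hs using AddSubmonoid.closure_induction with
  | mem x hx => exact hx
  | zero => exact absurd rfl hs0
  | add x y hx hy _ _ =>
    rcases Nat.eq_zero_or_pos x with rfl | hx0
    · grind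
    rcases Nat.eq_zero_or_pos y with rfl | hy0
    · grind
    exact absurd rfl (hirred x hx y hy hx0.ne' hy0.ne')

lemma primitives_generatedBy (hY : ∀ p ∈ Y, m ≤ p ∧ p < 2 * m) :
    Primitives (GeneratedBy Y) = Y := by
  refine (primitives_generatedBy_subset Y).antisymm fun p hp => ?_
  have hmp := hY p hp
  refine ⟨AddSubmonoid.subset_closure hp, by omega, fun a ha b hb ha0 hb0 hab => ?_⟩
  have := le_of_mem_generatedBy (fun q hq => (hY q hq).1) ha ha0
  have := le_of_mem_generatedBy (fun q hq => (hY q hq).1) hb hb0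
  omega

lemma multiplicity_generatedBy (hm : IsLeast Y m) (hm0 : m ≠ 0) :
    Multiplicity (GeneratedBy Y) = m :=
  (multiplicity_le (AddSubmonoid.subset_closure hm.1) hm0).antisymm <|
    le_csInf ⟨m, AddSubmonoid.subset_closure hm.1, hm0⟩
      fun _ hs => le_of_mem_generatedBy hm.2 hs.1 hs.2

lemma maxPrim_generatedBy (hY : ∀ p ∈ Y, m ≤ p ∧ p < 2 * m) (hn : IsGreatest Y n) :
    MaxPrim (GeneratedBy Y) = n := by
  rw [MaxPrim, primitives_generatedBy hY, hn.csSup_eq]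

lemma isNumericalSemigroup_generatedBy (hY : Nat.setGcd Y = 1) :
    IsNumericalSemigroup (GeneratedBy Y) := by
  refine ⟨zero_mem _, fun a ha b hb => add_mem ha hb, ?_⟩
  obtain ⟨c, hc⟩ := Nat.exists_mem_closure_of_ge Y
  refine (Set.finite_Iio c).subset fun x hx => ?_
  by_contra hxc
  exact hx (hc x (not_lt.mp hxc) (hY ▸ one_dvd x))

end GeneratedBy

namespace IsNumericalSemigroup

variable {S : Set ℕ}

lemma exists_forall_ge_mem (hS : IsNumericalSemigroup S) : ∃ c, ∀ x, c ≤ x → x ∈ S := by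
  obtain ⟨b, hb⟩ := hS.2.2.bddAbove
  exact ⟨b + 1, fun x hx => by_contra fun hxS => by have := hb hxS; omega⟩

lemma multiplicity_mem (hS : IsNumericalSemigroup S) :
    Multiplicity S ∈ S ∧ Multiplicity S ≠ 0 := by
  obtain ⟨c, hc⟩ := hS.exists_forall_ge_mem
  exact Nat.sInf_mem (s := {s | s ∈ S ∧ s ≠ 0}) ⟨c + 1, hc _ (by omega), by omega⟩

lemma multiplicity_mem_primitives (hS : IsNumericalSemigroup S) :
    Multiplicity S ∈ Primitives S := by
  obtain ⟨hm, hm0⟩ := hS.multiplicity_mem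
  refine ⟨hm, hm0, fun a ha b hb ha0 hb0 hab => ?_⟩
  have := multiplicity_le ha ha0
  have := multiplicity_le hb hb0
  omega

lemma bddAbove_primitives (hS : IsNumericalSemigroup S) : BddAbove (Primitives S) := by
  obtain ⟨c, hc⟩ := hS.exists_forall_ge_mem
  obtain ⟨hm, hm0⟩ := hS.multiplicity_mem
  refine ⟨c + Multiplicity S, fun p hp => not_lt.mp fun hlt => ?_⟩
  exact hp.2.2 _ hm (p - Multiplicity S) (hc _ (by omega)) hm0 (by omega) (by omega)

lemma maxPrim_mem_primitives (hS : IsNumericalSemigroup S) : MaxPrim S ∈ Primitives S :=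
  Nat.sSup_mem ⟨_, hS.multiplicity_mem_primitives⟩ hS.bddAbove_primitives

lemma le_maxPrim (hS : IsNumericalSemigroup S) {p : ℕ} (hp : p ∈ Primitives S) :
    p ≤ MaxPrim S :=
  le_csSup hS.bddAbove_primitives hp

lemma generatedBy_primitives (hS : IsNumericalSemigroup S) : GeneratedBy (Primitives S) = S := by
  refine Set.Subset.antisymm (fun s hs => ?_) fun s hsS => ?_
  · induction hs using AddSubmonoid.closure_induction with
    | mem x hx => exact hx.1
    | zero => exact hS.1
    | add x y _ _ hx hy => exact hS.2.1 x hx y hy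
  · induction s using Nat.strong_induction_on with
    | _ s ih =>
      by_cases hp : s ∈ Primitives S
      · exact AddSubmonoid.subset_closure hp
      rcases Nat.eq_zero_or_pos s with rfl | hs0
      · exact zero_mem _
      simp only [Primitives, Set.mem_ofPred_eq, not_and, not_forall, not_not] at hp
      obtain ⟨a, ha, b, hb, ha0, hb0, rfl⟩ := hp hsS hs0.ne'
      exact add_mem (ih a (by omega) ha) (ih b (by omega) hb)

/-- `S` contains two consecutive integers, and both are multiples of the gcd of the primitives. -/
lemma setGcd_primitives (hS : IsNumericalSemigroup S) : Nat.setGcd (Primitives S) = 1 := by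
  obtain ⟨c, hc⟩ := hS.exists_forall_ge_mem
  have hdvd : ∀ x, c ≤ x → Nat.setGcd (Primitives S) ∣ x := fun x hx =>
    Nat.setGcd_dvd_of_mem_closure (hS.generatedBy_primitives.symm ▸ hc x hx : x ∈ GeneratedBy _)
  exact Nat.dvd_one.mp <| (Nat.dvd_add_right (hdvd c le_rfl)).mp (hdvd (c + 1) (by omega))

lemma primDepth_eq_two_iff (hS : IsNumericalSemigroup S) :
    PrimDepth S = 2 ↔ Multiplicity S < MaxPrim S ∧ MaxPrim S < 2 * Multiplicity S := by
  obtain ⟨hm, hm0⟩ := hS.multiplicity_mem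
  have hne : MaxPrim S ≠ Multiplicity S + Multiplicity S := fun h =>
    hS.maxPrim_mem_primitives.2.2 _ hm _ hm hm0 hm0 h.symm
  rw [PrimDepth, ceilDiv_eq_two_iff (Nat.pos_of_ne_zero hm0)]
  omega

end IsNumericalSemigroup

/-- `B ∈ depthTwoSets n` encodes the primitive set `insert n B`: all its elements lie in
`(n / 2, n]` and it contains an element other than `n`. -/
def depthTwoSets (n : ℕ) : Finset (Finset ℕ) := (Ioo (n / 2) n).powerset.erase ∅

def coprimeDepthTwoSets (n : ℕ) : Finset (Finset ℕ) :=
  {B ∈ depthTwoSets n | (insert n B).gcd id = 1}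

lemma coprimeDepthTwoSets_subset (n : ℕ) : coprimeDepthTwoSets n ⊆ depthTwoSets n :=
  filter_subset _ _

lemma mem_depthTwoSets {n : ℕ} {B : Finset ℕ} :
    B ∈ depthTwoSets n ↔ B.Nonempty ∧ B ⊆ Ioo (n / 2) n := by
  rw [depthTwoSets, mem_erase, mem_powerset, ← nonempty_iff_ne_empty]

lemma card_depthTwoSets (n : ℕ) : #(depthTwoSets n) = 2 ^ ((n - 1) / 2) - 1 := by
  rw [depthTwoSets, card_erase_of_mem (empty_mem_powerset _), card_powerset, Nat.card_Ioo]
  congr 2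
  omega

lemma mul_mem_Ioo_half_iff {g N k : ℕ} (hg : 0 < g) :
    g * k ∈ Ioo (g * N / 2) (g * N) ↔ k ∈ Ioo (N / 2) N := by
  simp only [mem_Ioo, Nat.div_lt_iff_lt_mul two_pos, mul_assoc, Nat.mul_lt_mul_left hg]

lemma image_mul_mem_depthTwoSets_iff {g N : ℕ} {B : Finset ℕ} (hg : 0 < g) :
    B.image (g * ·) ∈ depthTwoSets (g * N) ↔ B ∈ depthTwoSets N := by
  simp only [mem_depthTwoSets, image_nonempty, image_subset_iff, mul_mem_Ioo_half_iff hg]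
  rfl

lemma gcd_insert_image_mul (g N : ℕ) (B : Finset ℕ) :
    (insert (g * N) (B.image (g * ·))).gcd id = g * (insert N B).gcd id := by
  rw [← image_insert, gcd_image]
  exact (gcd_mul_left (f := id)).trans (by rw [normalize_eq])

/-- Multiplication by `g` maps the coprime sets for `n / g` bijectively onto the sets of gcd `g`. -/
lemma card_filter_gcd_eq {n g : ℕ} (hgn : g ∣ n) (hg : 0 < g) :
    #{B ∈ depthTwoSets n | (insert n B).gcd id = g} = #(coprimeDepthTwoSets (n / g)) := by
  obtain ⟨N, rfl⟩ := hgn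
  rw [Nat.mul_div_cancel_left N hg]
  symm
  refine card_bij (fun B _ => B.image (g * ·)) (fun B hB => ?_)
    (fun _ _ _ _ h => image_injective (mul_right_injective₀ hg.ne') h) (fun B hB => ?_)
  · rw [coprimeDepthTwoSets, mem_filter] at hB
    rw [mem_filter, image_mul_mem_depthTwoSets_iff hg, gcd_insert_image_mul, hB.2, mul_one]
    exact ⟨hB.1, rfl⟩
  · rw [mem_filter] at hB
    obtain ⟨B', -, rfl⟩ :
        ∃ B' : Finset ℕ, (B' : Set ℕ) ⊆ Set.univ ∧ B'.image (g * ·) = B := by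
      refine subset_set_image_iff.mp fun b hb => ?_
      obtain ⟨k, rfl⟩ := hB.2 ▸ gcd_dvd (mem_insert_of_mem hb) (f := id)
      exact ⟨k, trivial, rfl⟩
    refine ⟨B', ?_, rfl⟩
    have hgcd : g * (insert N B').gcd id = g * 1 := by rw [← gcd_insert_image_mul, hB.2, mul_one]
    rw [coprimeDepthTwoSets, mem_filter]
    exact ⟨(image_mul_mem_depthTwoSets_iff hg).mp hB.1, Nat.eq_of_mul_eq_mul_left hg hgcd⟩

lemma sum_card_coprimeDepthTwoSets {n : ℕ} (hn : 0 < n) :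
    ∑ d ∈ n.divisors, #(coprimeDepthTwoSets d) = 2 ^ ((n - 1) / 2) - 1 := by
  have hmaps :
      Set.MapsTo (fun B : Finset ℕ => (insert n B).gcd id) ↑(depthTwoSets n) ↑n.divisors :=
    fun B _ => Nat.mem_divisors.mpr ⟨gcd_dvd (mem_insert_self n B) (f := id), hn.ne'⟩
  rw [← Nat.sum_div_divisors, ← card_depthTwoSets, card_eq_sum_card_fiberwise hmaps]
  exact sum_congr rfl fun g hg =>
    (card_filter_gcd_eq (Nat.dvd_of_mem_divisors hg) (Nat.pos_of_mem_divisors hg)).symm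

lemma card_coprimeDepthTwoSets (n : ℕ) :
    (#(coprimeDepthTwoSets n) : ℤ) =
      ∑ d ∈ n.divisors, ArithmeticFunction.moebius (n / d) * (2 ^ ((d - 1) / 2) - 1 : ℤ) := by
  rcases n.eq_zero_or_pos with rfl | hn
  · simp [coprimeDepthTwoSets, depthTwoSets]
  have hsum :
      ∀ N > 0, ∑ d ∈ N.divisors, (#(coprimeDepthTwoSets d) : ℤ) = 2 ^ ((N - 1) / 2) - 1 :=
    fun N hN => by
      rw [← Nat.cast_sum, sum_card_coprimeDepthTwoSets hN, Nat.cast_sub Nat.one_le_two_pow]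
      norm_num
  rw [← ArithmeticFunction.sum_eq_iff_sum_mul_moebius_eq.mp hsum n hn]
  simp only [Int.cast_id]
  exact Nat.sum_divisorsAntidiagonal'
    (fun a b => ArithmeticFunction.moebius a * (2 ^ ((b - 1) / 2) - 1 : ℤ))

section Correspondence

variable {n : ℕ} {B : Finset ℕ}

lemma exists_isLeast_isGreatest_of_mem_depthTwoSets (hB : B ∈ depthTwoSets n) :
    ∃ m, IsLeast (↑(insert n B) : Set ℕ) m ∧ IsGreatest (↑(insert n B) : Set ℕ) n ∧
      m < n ∧ n < 2 * m := by
  obtain ⟨hne, hsub⟩ := mem_depthTwoSets.mp hB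
  have hIoo : ∀ b ∈ B, n < 2 * b ∧ b < n := fun b hb => by
    have := mem_Ioo.mp (hsub hb)
    omega
  have hmin := hIoo _ (B.min'_mem hne)
  refine ⟨B.min' hne, ⟨mem_insert_of_mem (B.min'_mem hne), fun p hp => ?_⟩,
    ⟨mem_insert_self n B, fun p hp => ?_⟩, hmin.2, hmin.1⟩
  all_goals
    rcases mem_insert.mp hp with rfl | hp
    · omega
  · exact B.min'_le p hp
  · exact (hIoo p hp).2.le

lemma primitives_generatedBy_insert (hB : B ∈ depthTwoSets n) :
    Primitives (GeneratedBy ↑(insert n B)) = ↑(insert n B) := by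
  obtain ⟨m, hm, hn, -, hnm⟩ := exists_isLeast_isGreatest_of_mem_depthTwoSets hB
  exact primitives_generatedBy fun p hp => ⟨hm.2 hp, (hn.2 hp).trans_lt hnm⟩

lemma injOn_generatedBy_insert (n : ℕ) :
    Set.InjOn (fun B : Finset ℕ => GeneratedBy ↑(insert n B))
      (depthTwoSets n : Set (Finset ℕ)) := by
  intro B hB B' hB' h
  have hins : insert n B = insert n B' := coe_injective <| by
    rw [← primitives_generatedBy_insert hB, ← primitives_generatedBy_insert hB']
    exact congrArg Primitives h
  have hn : ∀ {C}, C ∈ depthTwoSets n → n ∉ C := fun hC hnC =>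
    (mem_Ioo.mp ((mem_depthTwoSets.mp hC).2 hnC)).2.false
  rw [← erase_insert (hn hB), hins, erase_insert (hn hB')]

lemma depthTwo_of_mem_coprimeDepthTwoSets (hB : B ∈ coprimeDepthTwoSets n) :
    IsNumericalSemigroup (GeneratedBy ↑(insert n B)) ∧
      MaxPrim (GeneratedBy ↑(insert n B)) = n ∧ PrimDepth (GeneratedBy ↑(insert n B)) = 2 := by
  rw [coprimeDepthTwoSets, mem_filter] at hB
  obtain ⟨m, hm, hn, hmn, hnm⟩ := exists_isLeast_isGreatest_of_mem_depthTwoSets hB.1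
  have hS := isNumericalSemigroup_generatedBy (by rw [Nat.setGcd_coe_finset, hB.2])
  have hmax := maxPrim_generatedBy (fun p hp => ⟨hm.2 hp, (hn.2 hp).trans_lt hnm⟩) hn
  refine ⟨hS, hmax, hS.primDepth_eq_two_iff.mpr ?_⟩
  rw [hmax, multiplicity_generatedBy hm (by omega)]
  exact ⟨hmn, hnm⟩

lemma exists_mem_coprimeDepthTwoSets {S : Set ℕ} (hS : IsNumericalSemigroup S)
    (hd : PrimDepth S = 2) :
    ∃ B ∈ coprimeDepthTwoSets (MaxPrim S), GeneratedBy ↑(insert (MaxPrim S) B) = S := by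
  obtain ⟨hmn, hnm⟩ := hS.primDepth_eq_two_iff.mp hd
  have hfin : (Primitives S).Finite := hS.bddAbove_primitives.finite
  have hP : insert (MaxPrim S) (hfin.toFinset.erase (MaxPrim S)) = hfin.toFinset :=
    insert_erase (hfin.mem_toFinset.mpr hS.maxPrim_mem_primitives)
  refine ⟨hfin.toFinset.erase (MaxPrim S), mem_filter.mpr ⟨mem_depthTwoSets.mpr
    ⟨⟨Multiplicity S, ?_⟩, fun p hp => ?_⟩, ?_⟩, ?_⟩
  · exact mem_erase.mpr ⟨hmn.ne, hfin.mem_toFinset.mpr hS.multiplicity_mem_primitives⟩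
  · obtain ⟨hpn, hp⟩ := mem_erase.mp hp
    have hp := hfin.mem_toFinset.mp hp
    have := multiplicity_le hp.1 hp.2.1
    have := hS.le_maxPrim hp
    exact mem_Ioo.mpr ⟨by omega, by omega⟩
  · rw [hP, ← Nat.setGcd_coe_finset, hfin.coe_toFinset, hS.setGcd_primitives]
  · rw [hP, hfin.coe_toFinset, hS.generatedBy_primitives]

lemma setOf_primDepth_eq_two_eq_image (n : ℕ) :
    {S : Set ℕ | IsNumericalSemigroup S ∧ MaxPrim S = n ∧ PrimDepth S = 2} =
      (fun B : Finset ℕ => GeneratedBy ↑(insert n B)) '' ↑(coprimeDepthTwoSets n) := by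
  ext S
  constructor
  · rintro ⟨hS, rfl, hd⟩
    obtain ⟨B, hB, hBS⟩ := exists_mem_coprimeDepthTwoSets hS hd
    exact ⟨B, hB, hBS⟩
  · rintro ⟨B, hB, rfl⟩
    exact depthTwo_of_mem_coprimeDepthTwoSets hB

end Correspondence

theorem stmt12_general (n : ℕ) :
    ({S : Set ℕ | IsNumericalSemigroup S ∧ MaxPrim S = n ∧ PrimDepth S = 2}.ncard : ℤ)
      = ∑ d ∈ n.divisors, (ArithmeticFunction.moebius (n / d)) *
          (2 ^ ((d - 1) / 2) - 1 : ℤ) := by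
  have hinj := (injOn_generatedBy_insert n).mono
    (coe_subset.mpr (coprimeDepthTwoSets_subset n))
  rw [setOf_primDepth_eq_two_eq_image, hinj.ncard_image, Set.ncard_coe_finset]
  exact card_coprimeDepthTwoSets n

/-- A_n(2) = Σ_{d∣n} μ(n/d) · (2^⌊(d−1)/2⌋ − 1). -/
theorem stmt12 (n : ℕ) (hn : 2 < n) :
    ({S : Set ℕ | IsNumericalSemigroup S ∧ MaxPrim S = n ∧ PrimDepth S = 2}.ncard : ℤ)
      = ∑ d ∈ n.divisors, (ArithmeticFunction.moebius (n / d)) *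
          (2 ^ ((d - 1) / 2) - 1 : ℤ) :=
  stmt12_general n
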